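/- With $\mathcal{G}$, $\pi_{\mathcal{G}}$ as in the stopping-cube construction for $(g,\omega)$ with $g=(a_Q1_Q)_Q$, $a_Q\ge 0$: for every $G\in\mathcal{G}$ the truncated sequence $g_G := (a_Q 1_Q)_{Q\in\mathcal{D}:\,\pi_{\mathcal{G}}(Q)=G}$ satisfies $\|g_G\|_{L^\infty_{\ell^{r'}}(\omega)} \le 2\, \langle \|g\|_{\ell^{r'}}\rangle^{\omega}_{G}$. -/

import Mathlib

open MeasureTheory ENNReal Set
open scoped Classical ENNReal NNReal

noncomputable section

/-- A dyadic cube in `ℝ^d`, given by a scale `k` and corner indices `n`. -/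
structure DyadicCube (d : ℕ) where
  k : ℤ
  n : Fin d → ℤ

namespace DyadicCube

variable {d : ℕ}

/-- The underlying set of a dyadic cube. -/
def toSet (Q : DyadicCube d) : Set (Fin d → ℝ) :=
  {x | ∀ i, (Q.n i : ℝ) * 2 ^ Q.k ≤ x i ∧ x i < ((Q.n i : ℝ) + 1) * 2 ^ Q.k}

instance : Countable (DyadicCube d) :=
  Countable.of_equiv (ℤ × (Fin d → ℤ))
    { toFun := fun p => ⟨p.1, p.2⟩
      invFun := fun Q => (Q.k, Q.n)
      left_inv := fun _ => rfl
      right_inv := fun _ => rfl }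

/-- The Lebesgue measure of a dyadic cube. -/
def vol (Q : DyadicCube d) : ℝ≥0∞ := volume Q.toSet

end DyadicCube

/-- Average of `f` over `A` with respect to `μ` (with the convention `0/0 = 0`). -/
def avgOn {α : Type*} [MeasurableSpace α] (μ : Measure α) (A : Set α) (f : α → ℝ≥0∞) : ℝ≥0∞ :=
  (∫⁻ x in A, f x ∂μ) / μ A

/-- `ℓ^r`-norm of a family of extended nonnegative reals, `1 ≤ r ≤ ∞`. -/
def lNorm {ι : Type*} (r : ℝ≥0∞) (a : ι → ℝ≥0∞) : ℝ≥0∞ :=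
  if r = ∞ then ⨆ i, a i else (∑' i, a i ^ r.toReal) ^ (1 / r.toReal)

/-- `L^p(μ)`-norm (lintegral version, for `ℝ≥0∞`-valued functions). -/
def lpNorm {α : Type*} [MeasurableSpace α] (p : ℝ) (μ : Measure α) (f : α → ℝ≥0∞) : ℝ≥0∞ :=
  (∫⁻ x, f x ^ p ∂μ) ^ (1 / p)

/-- `L^p_{ℓ^r}(μ)`-norm of a sequence-valued function. -/
def lpLrNorm {α ι : Type*} [MeasurableSpace α] (p : ℝ) (r : ℝ≥0∞) (μ : Measure α)
    (g : ι → α → ℝ≥0∞) : ℝ≥0∞ :=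
  lpNorm p μ (fun x => lNorm r (fun i => g i x))

/-- `L^∞_{ℓ^{r'}}(μ)`-norm of a sequence-valued function. -/
def linfLrNorm {α ι : Type*} [MeasurableSpace α] (r' : ℝ≥0∞) (μ : Measure α)
    (g : ι → α → ℝ≥0∞) : ℝ≥0∞ :=
  essSup (fun x => lNorm r' (fun i => g i x)) μ

namespace DyadicCube

variable {d : ℕ}

/-- The measure `w dx` with density `w`. -/
def wM (w : (Fin d → ℝ) → ℝ≥0∞) : Measure (Fin d → ℝ) := volume.withDensity w

/-- Component `Q` of `T(fμ)`, namely `λ_Q ⟨fμ⟩_Q 1_Q`. -/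
def Tcomp (lam : DyadicCube d → ℝ≥0) (μ : Measure (Fin d → ℝ)) (f : (Fin d → ℝ) → ℝ≥0∞)
    (Q : DyadicCube d) (x : Fin d → ℝ) : ℝ≥0∞ :=
  Q.toSet.indicator (fun _ => (lam Q : ℝ≥0∞) * ((∫⁻ y in Q.toSet, f y ∂μ) / Q.vol)) x

/-- Component `Q` of the localized operator `T_R(fμ)`. -/
def TlocComp (lam : DyadicCube d → ℝ≥0) (μ : Measure (Fin d → ℝ)) (f : (Fin d → ℝ) → ℝ≥0∞)
    (R Q : DyadicCube d) (x : Fin d → ℝ) : ℝ≥0∞ :=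
  if Q.toSet ⊆ R.toSet then Tcomp lam μ f Q x else 0

/-- `T^*(gμ) = ∑_Q λ_Q ⟨g_Q μ⟩_Q 1_Q`. -/
def Tstar (lam : DyadicCube d → ℝ≥0) (μ : Measure (Fin d → ℝ))
    (g : DyadicCube d → (Fin d → ℝ) → ℝ≥0∞) (x : Fin d → ℝ) : ℝ≥0∞ :=
  ∑' Q : DyadicCube d,
    Q.toSet.indicator (fun _ => (lam Q : ℝ≥0∞) * ((∫⁻ y in Q.toSet, g Q y ∂μ) / Q.vol)) x

/-- `T^*_R(gμ) = ∑_{Q ⊆ R} λ_Q ⟨g_Q μ⟩_Q 1_Q`. -/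
def TstarLoc (lam : DyadicCube d → ℝ≥0) (μ : Measure (Fin d → ℝ))
    (g : DyadicCube d → (Fin d → ℝ) → ℝ≥0∞) (R : DyadicCube d) (x : Fin d → ℝ) : ℝ≥0∞ :=
  ∑' Q : DyadicCube d,
    if Q.toSet ⊆ R.toSet then
      Q.toSet.indicator (fun _ => (lam Q : ℝ≥0∞) * ((∫⁻ y in Q.toSet, g Q y ∂μ) / Q.vol)) x
    else 0

/-- The piecewise constant sequence `(a_Q 1_Q)_Q`. -/
def gPC (a : DyadicCube d → ℝ≥0) (Q : DyadicCube d) (x : Fin d → ℝ) : ℝ≥0∞ :=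
  Q.toSet.indicator (fun _ => (a Q : ℝ≥0∞)) x

/-- Maximal proper dyadic subcubes `G'` of `G` satisfying `P G G'`. -/
def maxSubcubes (P : DyadicCube d → DyadicCube d → Prop) (G : DyadicCube d) :
    Set (DyadicCube d) :=
  {G' | G'.toSet ⊂ G.toSet ∧ P G G' ∧
    ∀ G'' : DyadicCube d, G'.toSet ⊆ G''.toSet → G''.toSet ⊂ G.toSet → P G G'' →
      G''.toSet = G'.toSet}

/-- Generations of stopping cubes. -/
def stopGen (P : DyadicCube d → DyadicCube d → Prop) (Q0 : DyadicCube d) :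
    ℕ → Set (DyadicCube d)
  | 0 => {Q0}
  | j + 1 => {G' | ∃ G ∈ stopGen P Q0 j, G' ∈ maxSubcubes P G}

/-- The family of stopping cubes generated from `Q0` by the stopping condition `P`. -/
def stopFam (P : DyadicCube d → DyadicCube d → Prop) (Q0 : DyadicCube d) :
    Set (DyadicCube d) :=
  ⋃ j : ℕ, stopGen P Q0 j

/-- The part of a stopping cube `G` not covered by its stopping children. -/
def stopE (P : DyadicCube d → DyadicCube d → Prop) (G : DyadicCube d) : Set (Fin d → ℝ) :=
  G.toSet \ ⋃ G' ∈ maxSubcubes P G, G'.toSet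

/-- `G` is the minimal cube of the family `𝒢` containing `R`, i.e. `G = π_𝒢(R)`. -/
def IsPrincipal (𝒢 : Set (DyadicCube d)) (R G : DyadicCube d) : Prop :=
  G ∈ 𝒢 ∧ R.toSet ⊆ G.toSet ∧ ∀ G' ∈ 𝒢, R.toSet ⊆ G'.toSet → G.toSet ⊆ G'.toSet

/-- Pointwise `ℓ^{r'}`-norm of `(a_Q 1_Q)_{Q ∈ D}`. -/
def gNormFn (r' : ℝ≥0∞) (D : Finset (DyadicCube d)) (a : DyadicCube d → ℝ≥0)
    (x : Fin d → ℝ) : ℝ≥0∞ :=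
  lNorm r' (fun Q : DyadicCube d => if Q ∈ D then gPC a Q x else 0)

/-- `ℓ^{r'}`-norm of the tail `(a_Q)_{Q ∈ D, Q ⊇ R}`. -/
def gTail (r' : ℝ≥0∞) (D : Finset (DyadicCube d)) (a : DyadicCube d → ℝ≥0)
    (R : DyadicCube d) : ℝ≥0∞ :=
  lNorm r' (fun Q : DyadicCube d => if Q ∈ D ∧ R.toSet ⊆ Q.toSet then (a Q : ℝ≥0∞) else 0)

/-- The stopping condition for the pair `(g, ω)` with `g = (a_Q 1_Q)_{Q ∈ D}`. -/
def gCond (ω : Measure (Fin d → ℝ)) (r' : ℝ≥0∞) (D : Finset (DyadicCube d))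
    (a : DyadicCube d → ℝ≥0) (G G' : DyadicCube d) : Prop :=
  2 * avgOn ω G.toSet (gNormFn r' D a) < gTail r' D a G'

/-- The stopping condition for the pair `(f, σ)`. -/
def fCond (σ : Measure (Fin d → ℝ)) (f : (Fin d → ℝ) → ℝ≥0∞) (F F' : DyadicCube d) : Prop :=
  2 * avgOn σ F.toSet f < avgOn σ F'.toSet f

end DyadicCube

open DyadicCube

/-! At a point `x`, the cubes `Q ∈ D` with `π_𝒢(Q) = G` that contain `x` form a chain, so the
truncated sequence at `x` is dominated by the tail `(a_Q)_{Q ⊇ R}` of the smallest of them, `R`.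
If `R = G`, this tail is at most `‖g(y)‖_{ℓ^{r'}}` for every `y ∈ G`, hence at most the average.
If `R ⊊ G` and the tail exceeded `2⟨‖g‖_{ℓ^{r'}}⟩^ω_G`, then `R` would satisfy the stopping
condition relative to `G`, and so would lie in a maximal stopping subcube of `G`: a stopping cube
strictly between `R` and `G`, contradicting `π_𝒢(R) = G`. -/

theorem lNorm_mono {ι : Type*} {r : ℝ≥0∞} {f g : ι → ℝ≥0∞} (h : ∀ i, f i ≤ g i) :
    lNorm r f ≤ lNorm r g := by
  unfold lNorm
  split_ifs
  · exact iSup_mono h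
  · gcongr with i
    exact h i

theorem le_avgOn {α : Type*} [MeasurableSpace α] {μ : Measure α} {A : Set α} {c : ℝ≥0∞}
    {f : α → ℝ≥0∞} (hA : MeasurableSet A) (hμ₀ : μ A ≠ 0) (hμ : μ A ≠ ∞)
    (h : ∀ y ∈ A, c ≤ f y) : c ≤ avgOn μ A f := by
  rw [avgOn, ENNReal.le_div_iff_mul_le (Or.inl hμ₀) (Or.inl hμ), ← setLIntegral_const]
  exact setLIntegral_mono' hA h

namespace DyadicCube

variable {d : ℕ}

theorem mem_toSet_iff {Q : DyadicCube d} {x : Fin d → ℝ} :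
    x ∈ Q.toSet ↔ ∀ i, Q.n i = ⌊x i / 2 ^ Q.k⌋ := by
  have h2 : (0 : ℝ) < 2 ^ Q.k := by positivity
  simp only [toSet, mem_ofPred_eq, eq_comm (a := Q.n _), Int.floor_eq_iff, le_div_iff₀ h2,
    div_lt_iff₀ h2]

theorem toSet_nonempty (Q : DyadicCube d) : Q.toSet.Nonempty :=
  ⟨fun i => Q.n i * 2 ^ Q.k,
    fun _ => ⟨le_rfl, mul_lt_mul_of_pos_right (lt_add_one _) (by positivity)⟩⟩

theorem measurableSet_toSet (Q : DyadicCube d) : MeasurableSet Q.toSet := by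
  have : Q.toSet = univ.pi fun i => Ico ((Q.n i : ℝ) * 2 ^ Q.k) ((Q.n i + 1) * 2 ^ Q.k) := by
    ext x; simp [toSet, mem_pi]
  exact this ▸ MeasurableSet.univ_pi fun _ => measurableSet_Ico

theorem floor_div_two_zpow_of_le (t : ℝ) {k m : ℤ} (h : k ≤ m) :
    ⌊t / 2 ^ m⌋ = ⌊t / 2 ^ k⌋ / 2 ^ (m - k).toNat := by
  have hm : (2 : ℝ) ^ m = 2 ^ k * ((2 ^ (m - k).toNat : ℕ) : ℝ) := by
    rw [Nat.cast_pow, Nat.cast_ofNat, ← zpow_natCast, Int.toNat_of_nonneg (by omega),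
      ← zpow_add₀ two_ne_zero, add_sub_cancel]
  rw [hm, ← div_div, Int.floor_div_natCast, Nat.cast_pow, Nat.cast_ofNat]

theorem toSet_subset_of_mem_of_k_le {Q₁ Q₂ : DyadicCube d} {x : Fin d → ℝ}
    (hx₁ : x ∈ Q₁.toSet) (hx₂ : x ∈ Q₂.toSet) (hk : Q₁.k ≤ Q₂.k) : Q₁.toSet ⊆ Q₂.toSet := by
  intro y hy
  rw [mem_toSet_iff] at hx₁ hx₂ hy ⊢
  intro i
  rw [hx₂, floor_div_two_zpow_of_le _ hk, floor_div_two_zpow_of_le _ hk, ← hx₁, hy]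

theorem k_lt_of_toSet_ssubset {Q₁ Q₂ : DyadicCube d} (h : Q₁.toSet ⊂ Q₂.toSet) :
    Q₁.k < Q₂.k := by
  obtain ⟨x, hx⟩ := Q₁.toSet_nonempty
  by_contra! hk
  exact h.not_subset (toSet_subset_of_mem_of_k_le (h.subset hx) hx hk)

theorem exists_mem_maxSubcubes {P : DyadicCube d → DyadicCube d → Prop} {G R : DyadicCube d}
    (hRG : R.toSet ⊂ G.toSet) (hP : P G R) : ∃ G' ∈ maxSubcubes P G, R.toSet ⊆ G'.toSet := by
  -- a candidate `G'` of largest scale is maximal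
  obtain ⟨k, ⟨G', ⟨hRG', hG'G, hPG'⟩, rfl⟩, hmax⟩ := Int.exists_greatest_of_bdd
    (P := fun k => ∃ G' : DyadicCube d,
      (R.toSet ⊆ G'.toSet ∧ G'.toSet ⊂ G.toSet ∧ P G G') ∧ G'.k = k)
    ⟨G.k, fun _ ⟨_, ⟨_, hG'G, _⟩, hk⟩ => hk ▸ (k_lt_of_toSet_ssubset hG'G).le⟩
    ⟨R.k, R, ⟨subset_rfl, hRG, hP⟩, rfl⟩
  refine ⟨G', ⟨hG'G, hPG', fun G'' hG'G'' hG''G hPG'' => ?_⟩, hRG'⟩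
  obtain ⟨x, hx⟩ := G'.toSet_nonempty
  exact (toSet_subset_of_mem_of_k_le (hG'G'' hx) hx
    (hmax _ ⟨G'', ⟨hRG'.trans hG'G'', hG''G, hPG''⟩, rfl⟩)).antisymm hG'G''

theorem maxSubcubes_subset_stopFam {P : DyadicCube d → DyadicCube d → Prop}
    {Q0 G : DyadicCube d} (hG : G ∈ stopFam P Q0) : maxSubcubes P G ⊆ stopFam P Q0 := by
  obtain ⟨j, hj⟩ := mem_iUnion.1 hG
  exact fun G' hG' => mem_iUnion.2 ⟨j + 1, G, hj, hG'⟩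

theorem not_stopCond_of_isPrincipal {P : DyadicCube d → DyadicCube d → Prop}
    {Q0 G R : DyadicCube d} (hR : IsPrincipal (stopFam P Q0) R G)
    (hRG : R.toSet ⊂ G.toSet) : ¬ P G R := by
  intro hP
  obtain ⟨G', hG', hRG'⟩ := exists_mem_maxSubcubes hRG hP
  exact hG'.1.not_subset (hR.2.2 G' (maxSubcubes_subset_stopFam hR.1 hG') hRG')

theorem gTail_le_gNormFn (r' : ℝ≥0∞) (D : Finset (DyadicCube d)) (a : DyadicCube d → ℝ≥0)
    {R : DyadicCube d} {y : Fin d → ℝ} (hy : y ∈ R.toSet) :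
    gTail r' D a R ≤ gNormFn r' D a y := by
  refine lNorm_mono fun Q => ?_
  split_ifs with hQ hQD
  · simp [gPC, indicator_of_mem (hQ.2 hy)]
  · exact absurd hQ.1 hQD
  all_goals exact zero_le

theorem gTail_le_avgOn_gNormFn (ω : Measure (Fin d → ℝ)) (r' : ℝ≥0∞)
    (D : Finset (DyadicCube d)) (a : DyadicCube d → ℝ≥0) {R : DyadicCube d}
    (hR₀ : ω R.toSet ≠ 0) (hR : ω R.toSet ≠ ∞) :
    gTail r' D a R ≤ avgOn ω R.toSet (gNormFn r' D a) :=
  le_avgOn R.measurableSet_toSet hR₀ hR fun _ hy => gTail_le_gNormFn r' D a hy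

theorem gTail_le_of_isPrincipal {ω : Measure (Fin d → ℝ)} {r' : ℝ≥0∞}
    {D : Finset (DyadicCube d)} {a : DyadicCube d → ℝ≥0} {Q0 G R : DyadicCube d}
    (hG₀ : ω G.toSet ≠ 0) (hG : ω G.toSet ≠ ∞)
    (hR : IsPrincipal (stopFam (gCond ω r' D a) Q0) R G) :
    gTail r' D a R ≤ 2 * avgOn ω G.toSet (gNormFn r' D a) := by
  rcases hR.2.1.eq_or_ssubset with hRG | hRG
  · calc gTail r' D a R ≤ avgOn ω G.toSet (gNormFn r' D a) :=
          hRG ▸ gTail_le_avgOn_gNormFn ω r' D a (hRG ▸ hG₀) (hRG ▸ hG)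
      _ ≤ 2 * avgOn ω G.toSet (gNormFn r' D a) := le_mul_of_one_le_left zero_le one_le_two
  · exact not_lt.1 (not_stopCond_of_isPrincipal hR hRG)

/-- The witness is the smallest cube of `D` with property `p` containing `x`, or `R₀` if there
is none. -/
theorem exists_lNorm_le_gTail (r' : ℝ≥0∞) (D : Finset (DyadicCube d)) (a : DyadicCube d → ℝ≥0)
    {p : DyadicCube d → Prop} {R₀ : DyadicCube d} (hR₀ : p R₀) (x : Fin d → ℝ) :
    ∃ R, p R ∧ lNorm r' (fun Q => if Q ∈ D ∧ p Q then gPC a Q x else 0) ≤ gTail r' D a R := by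
  by_cases hS : (D.filter fun Q => p Q ∧ x ∈ Q.toSet).Nonempty
  · obtain ⟨R, hR, hRmin⟩ := Finset.exists_min_image _ k hS
    obtain ⟨-, hpR, hxR⟩ := Finset.mem_filter.1 hR
    refine ⟨R, hpR, lNorm_mono fun Q => ?_⟩
    by_cases hxQ : x ∈ Q.toSet
    · split_ifs with hQ hQ'
      · exact le_of_eq (indicator_of_mem hxQ _)
      · exact absurd ⟨hQ.1, toSet_subset_of_mem_of_k_le hxR hxQ
          (hRmin Q (Finset.mem_filter.2 ⟨hQ.1, hQ.2, hxQ⟩))⟩ hQ'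
      all_goals exact zero_le
    · split_ifs <;> simp [gPC, indicator_of_notMem hxQ]
  · refine ⟨R₀, hR₀, lNorm_mono fun Q => ?_⟩
    refine le_of_eq_of_le ?_ zero_le
    split_ifs with hQ
    · exact indicator_of_notMem (fun hxQ => hS ⟨Q, Finset.mem_filter.2 ⟨hQ.1, hQ.2, hxQ⟩⟩) _
    · rfl

end DyadicCube

theorem stopping_property_b5_general
    {d : ℕ} (r' : ℝ≥0∞)
    (ω : Measure (Fin d → ℝ))
    (hω : ∀ Q : DyadicCube d, 0 < ω Q.toSet ∧ ω Q.toSet < ∞)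
    (Q0 : DyadicCube d) (D : Finset (DyadicCube d))
    (a : DyadicCube d → ℝ≥0) :
    ∀ G ∈ stopFam (gCond ω r' D a) Q0,
      essSup (fun x => lNorm r' (fun Q : DyadicCube d =>
          if Q ∈ D ∧ IsPrincipal (stopFam (gCond ω r' D a) Q0) Q G then gPC a Q x else 0)) ω
        ≤ 2 * avgOn ω G.toSet (gNormFn r' D a) := by
  intro G hG
  refine essSup_le_of_ae_le _ (Filter.Eventually.of_forall fun x => ?_)
  obtain ⟨R, hR, hle⟩ := exists_lNorm_le_gTail r' D a
    (p := fun Q => IsPrincipal (stopFam (gCond ω r' D a) Q0) Q G)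
    ⟨hG, subset_rfl, fun _ _ => id⟩ x
  exact hle.trans (gTail_le_of_isPrincipal (hω G).1.ne' (hω G).2.ne hR)

/-- **Stopping property (b5).** For every stopping cube `G ∈ 𝒢`, the truncated sequence
`g_G = (a_Q 1_Q)_{π_𝒢(Q) = G}` satisfies `‖g_G‖_{L^∞_{ℓ^{r'}}(ω)} ≤ 2⟨‖g‖_{ℓ^{r'}}⟩^ω_G`. -/
theorem stopping_property_b5
    {d : ℕ} (r' : ℝ≥0∞) (hr' : 1 ≤ r')
    (ω : Measure (Fin d → ℝ))
    (hω : ∀ Q : DyadicCube d, 0 < ω Q.toSet ∧ ω Q.toSet < ∞)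
    (Q0 : DyadicCube d) (D : Finset (DyadicCube d))
    (hD : ∀ Q ∈ D, Q.toSet ⊆ Q0.toSet)
    (a : DyadicCube d → ℝ≥0) :
    ∀ G ∈ stopFam (gCond ω r' D a) Q0,
      essSup (fun x => lNorm r' (fun Q : DyadicCube d =>
          if Q ∈ D ∧ IsPrincipal (stopFam (gCond ω r' D a) Q0) Q G then gPC a Q x else 0)) ω
        ≤ 2 * avgOn ω G.toSet (gNormFn r' D a) :=
  stopping_property_b5_general r' ω hω Q0 D a
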